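/- arXiv:2410.14227 — 2 statements merged into one kernel-verified Lean document; each statement's English description precedes it below -/
import Mathlib

section
/- Let W be a Morse sequence on K with reference pair (∧,∨). (1) If z and z′ are p-cycles of K with ∧(z) = ∧(z′), then z and z′ are homologous. (2) If z and z′ are p-cocycles of K with ∨(z) = ∨(z′), then z and z′ are cohomologous. -/
/-! ## Basic notions: simplicial complexes, collapses, expansions, fillings -/

variable {V : Type*} [DecidableEq V]

/-- A (finite) simplicial complex: a finite collection of nonempty finite sets that is
closed under taking nonempty subsets. -/
def IsComplex (K : Finset (Finset V)) : Prop :=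
  ∀ τ ∈ K, τ.Nonempty ∧ ∀ σ, σ ⊆ τ → σ.Nonempty → σ ∈ K

/-- `ν` is a facet (inclusion-maximal face) of `K`. -/
def IsFacet (K : Finset (Finset V)) (ν : Finset V) : Prop :=
  ν ∈ K ∧ ∀ ρ ∈ K, ν ⊆ ρ → ρ = ν

/-- `(σ, τ)` is a free pair for `K`: `σ ⊊ τ` and `τ` is the only face of `K`
strictly containing `σ`. -/
def IsFreePair (K : Finset (Finset V)) (σ τ : Finset V) : Prop :=
  σ ∈ K ∧ τ ∈ K ∧ σ ⊂ τ ∧ ∀ ρ ∈ K, σ ⊂ ρ → ρ = τ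

/-- `K` is an elementary expansion of `L` (equivalently, `L` is an elementary collapse
of `K`): `L = K \ {σ, τ}` for some free pair `(σ, τ)` of `K`. -/
def ElemExpansion (L K : Finset (Finset V)) : Prop :=
  ∃ σ τ, IsFreePair K σ τ ∧ L = K \ {σ, τ}

/-- `K` is an elementary filling of `L` (equivalently, `L` is an elementary perforation
of `K`): `L = K \ {ν}` for some facet `ν` of `K`. -/
def ElemFilling (L K : Finset (Finset V)) : Prop :=
  ∃ ν, IsFacet K ν ∧ L = K \ {ν}

/-- `L` is an elementary collapse of `K`. -/
def ElemCollapse (K L : Finset (Finset V)) : Prop :=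
  ∃ σ τ, IsFreePair K σ τ ∧ L = K \ {σ, τ}

/-- `K` collapses onto `L`: there is a sequence of elementary collapses from `K` to `L`. -/
def CollapsesOnto (K L : Finset (Finset V)) : Prop :=
  Relation.ReflTransGen ElemCollapse K L

/-! ## Morse sequences -/

/-- A Morse sequence `⟨∅ = K₀, …, K_k = K⟩`: each `K_i` is a simplicial complex that is
an elementary expansion or an elementary filling of `K_{i-1}`. -/
structure MorseSeq (V : Type*) [DecidableEq V] where
  k : ℕ
  seq : ℕ → Finset (Finset V)
  cpx : ∀ i ≤ k, IsComplex (seq i)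
  init : seq 0 = ∅
  step : ∀ i, 1 ≤ i → i ≤ k → ElemExpansion (seq (i - 1)) (seq i) ∨ ElemFilling (seq (i - 1)) (seq i)

/-- The simplicial complex `K = K_k` on which the Morse sequence lives. -/
def MorseSeq.cplx (W : MorseSeq V) : Finset (Finset V) := W.seq W.k

/-- A face added by a filling step: a critical face of `W`. -/
def MorseSeq.Critical (W : MorseSeq V) (ν : Finset V) : Prop :=
  ∃ i, 1 ≤ i ∧ i ≤ W.k ∧ W.seq i \ W.seq (i - 1) = {ν}

/-- `(σ, τ)` is a regular pair for `W`: the two faces are added together by an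
elementary expansion step. -/
def MorseSeq.Regular (W : MorseSeq V) (σ τ : Finset V) : Prop :=
  ∃ i, 1 ≤ i ∧ i ≤ W.k ∧ σ ⊂ τ ∧ W.seq i \ W.seq (i - 1) = {σ, τ}

/-- `σ` is lower regular for `W`. -/
def MorseSeq.LowerRegular (W : MorseSeq V) (σ : Finset V) : Prop := ∃ τ, W.Regular σ τ

/-- `τ` is upper regular for `W`. -/
def MorseSeq.UpperRegular (W : MorseSeq V) (τ : Finset V) : Prop := ∃ σ, W.Regular σ τ

/-! ## Chains modulo 2 -/

/-- The boundary `∂(σ)` of a simplex: the chain of its (nonempty) codimension-one faces. -/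
def bd (σ : Finset V) : Finset (Finset V) :=
  σ.powerset.filter fun ρ => ρ.Nonempty ∧ ρ.card + 1 = σ.card

/-- The coboundary `δ(σ)` of a simplex in `K`: the chain of faces of `K` of
codimension one over `σ` containing `σ`. -/
def cobd (K : Finset (Finset V)) (σ : Finset V) : Finset (Finset V) :=
  K.filter fun τ => σ ⊆ τ ∧ σ.card + 1 = τ.card

/-- Mod-2 linear extension: `chainSum c f` is the sum (symmetric difference) of
the chains `f σ` over `σ ∈ c`; an element belongs to it iff it belongs to an odd
number of the `f σ`. -/
def chainSum (c : Finset (Finset V)) (f : Finset V → Finset (Finset V)) : Finset (Finset V) :=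
  (c.biUnion f).filter fun ν => (c.filter fun σ => ν ∈ f σ).card % 2 = 1

/-- `c` is a `p`-chain of `K`: a set of `p`-simplices of `K`. -/
def IsChainOf (K : Finset (Finset V)) (p : ℕ) (c : Finset (Finset V)) : Prop :=
  ∀ ν ∈ c, ν ∈ K ∧ ν.card = p + 1

/-- `c` is a chain of critical `p`-simplices of `W` (an element of `Ŵ[p]`). -/
def IsCritChain (W : MorseSeq V) (p : ℕ) (c : Finset (Finset V)) : Prop :=
  ∀ ν ∈ c, W.Critical ν ∧ ν.card = p + 1

/-! ## Frames, reference and coreference maps -/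

/-- A frame on `W`: it assigns to each `p`-simplex of `K` a chain of critical
`p`-simplices of `W`. -/
def IsFrame (W : MorseSeq V) (Υ : Finset V → Finset (Finset V)) : Prop :=
  ∀ ν ∈ W.cplx, ∀ μ ∈ Υ ν, W.Critical μ ∧ μ.card = ν.card

/-- `Λ` is the reference map of `W`: a frame with `Λ(ν) = ν` for critical `ν`, and
`Λ(τ) = 0`, `Λ(∂τ) = 0` for upper regular `τ`. -/
def IsRefMap (W : MorseSeq V) (Λ : Finset V → Finset (Finset V)) : Prop :=
  IsFrame W Λ ∧ (∀ ν, W.Critical ν → Λ ν = {ν}) ∧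
    ∀ τ, W.UpperRegular τ → Λ τ = ∅ ∧ chainSum (bd τ) Λ = ∅

/-- `Λ` is the coreference map of `W`: a frame with `Λ(ν) = ν` for critical `ν`, and
`Λ(σ) = 0`, `Λ(δσ) = 0` for lower regular `σ`. -/
def IsCorefMap (W : MorseSeq V) (Λ : Finset V → Finset (Finset V)) : Prop :=
  IsFrame W Λ ∧ (∀ ν, W.Critical ν → Λ ν = {ν}) ∧
    ∀ σ, W.LowerRegular σ → Λ σ = ∅ ∧ chainSum (cobd W.cplx σ) Λ = ∅

/-- The extension map `∧̃` of `W` (defined from the coreference map `Vee`):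
`∧̃(κ) = {ν ∈ K | κ ∈ ∨(ν)}`. -/
def extMap (W : MorseSeq V) (Vee : Finset V → Finset (Finset V)) (κ : Finset V) :
    Finset (Finset V) :=
  W.cplx.filter fun ν => κ ∈ Vee ν

/-- The coextension map `∨̃` of `W` (defined from the reference map `Λ`):
`∨̃(κ) = {ν ∈ K | κ ∈ ∧(ν)}`. -/
def coextMap (W : MorseSeq V) (Λ : Finset V → Finset (Finset V)) (κ : Finset V) :
    Finset (Finset V) :=
  W.cplx.filter fun ν => κ ∈ Λ ν

/-! ## Homologous cycles, cohomologous cocycles (mod 2) -/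

/-- Two `p`-chains of `K` are homologous: their sum is the boundary of a `(p+1)`-chain
of `K`. -/
def Homologous (K : Finset (Finset V)) (p : ℕ) (z z' : Finset (Finset V)) : Prop :=
  ∃ c, IsChainOf K (p + 1) c ∧ chainSum c bd = symmDiff z z'

/-- Two `p`-chains of `K` are cohomologous: their sum is the coboundary of a
`(p-1)`-chain of `K`. -/
def Cohomologous (K : Finset (Finset V)) (p : ℕ) (z z' : Finset (Finset V)) : Prop :=
  ∃ c, IsChainOf K (p - 1) c ∧ chainSum c (cobd K) = symmDiff z z'

/-!
Replacing `z, z'` by `w = z + z'`, it suffices to show that a cycle `w` with `∧(w) = 0` is a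
boundary and that a cocycle `w` with `∨(w) = 0` is a coboundary.

For cycles, go up the sequence `K₀ ⊆ ⋯ ⊆ K_k` and push `w` from `K_{i+1}` into `K_i`. The
reference map sends faces of `K_i` to chains of `K_i`, so if step `i + 1` fills a critical face
`ν`, then `ν` would occur exactly once in `∧(w)`; hence `ν ∉ w`. If step `i + 1` adds a free pair
`(σ, τ)`, then `τ ∉ w`, since otherwise `σ` would occur exactly once in `∂w`, and adding `∂τ` to
`w` removes `σ` without changing `∂w = 0` or `∧(w) = 0`, because `∧(∂τ) = 0`.

Cocycles are the dual case, going down the sequence and pushing `w` off `K_i`. The coreference map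
sends faces outside `K_i` to chains outside `K_i`, and the correction term is `δσ`.
-/

open scoped symmDiff
open Finset

section ChainSum

variable {c a b : Finset (Finset V)} {f : Finset V → Finset (Finset V)} {σ ν : Finset V}

theorem mem_chainSum : ν ∈ chainSum c f ↔ #(c.filter (ν ∈ f ·)) % 2 = 1 := by
  refine ⟨fun h => (mem_filter.1 h).2, fun h => mem_filter.2 ⟨?_, h⟩⟩
  obtain ⟨σ, hσ⟩ := card_pos.1 (by omega : 0 < #(c.filter (ν ∈ f ·)))
  exact mem_biUnion.2 ⟨σ, (mem_filter.1 hσ).1, (mem_filter.1 hσ).2⟩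

@[simp]
theorem chainSum_empty : chainSum ∅ f = ∅ := by
  simp [chainSum]

theorem chainSum_singleton : chainSum {σ} f = f σ := by
  ext ν
  by_cases h : ν ∈ f σ <;> simp [mem_chainSum, filter_singleton, h]

theorem card_symmDiff_add_two_mul_card_inter {α : Type*} [DecidableEq α] (s t : Finset α) :
    #(s ∆ t) + 2 * #(s ∩ t) = #s + #t := by
  rw [symmDiff_eq_sup_sdiff_inf, sup_eq_union, inf_eq_inter,
    card_sdiff_of_subset inter_subset_union]
  have := card_union_add_card_inter s t
  have := card_le_card (inter_subset_union (s := s) (t := t))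
  omega

theorem chainSum_symmDiff : chainSum (a ∆ b) f = chainSum a f ∆ chainSum b f := by
  ext ν
  have hfilter : (a ∆ b).filter (ν ∈ f ·) = a.filter (ν ∈ f ·) ∆ b.filter (ν ∈ f ·) := by
    ext
    simp only [mem_filter, mem_symmDiff]
    tauto
  have := card_symmDiff_add_two_mul_card_inter (a.filter (ν ∈ f ·)) (b.filter (ν ∈ f ·))
  simp only [mem_symmDiff, mem_chainSum, hfilter]
  omega

theorem chainSum_eq_empty_of_card_even (h : ∀ ν, #(c.filter (ν ∈ f ·)) % 2 = 0) :
    chainSum c f = ∅ :=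
  eq_empty_of_forall_notMem fun ν hν => by
    have := h ν
    rw [mem_chainSum] at hν
    omega

theorem exists_ne_of_chainSum_eq_empty (h : chainSum c f = ∅) (hσ : σ ∈ c) (hν : ν ∈ f σ) :
    ∃ ρ ∈ c, ν ∈ f ρ ∧ ρ ≠ σ := by
  have heven : ν ∉ chainSum c f := h ▸ notMem_empty ν
  have hpos := card_pos.2 ⟨σ, (mem_filter (p := (ν ∈ f ·))).2 ⟨hσ, hν⟩⟩
  rw [mem_chainSum] at heven
  obtain ⟨ρ, hρ, hρσ⟩ := exists_mem_ne (s := c.filter (ν ∈ f ·)) (by omega) σ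
  exact ⟨ρ, (mem_filter.1 hρ).1, (mem_filter.1 hρ).2, hρσ⟩

end ChainSum

section Faces

variable {K : Finset (Finset V)} {p : ℕ} {c : Finset (Finset V)} {σ τ ρ : Finset V}

omit [DecidableEq V] in
@[simp]
theorem mem_bd : ρ ∈ bd σ ↔ ρ ⊆ σ ∧ ρ.Nonempty ∧ #ρ + 1 = #σ := by
  simp [bd]

@[simp]
theorem mem_cobd : τ ∈ cobd K σ ↔ τ ∈ K ∧ σ ⊆ τ ∧ #σ + 1 = #τ := by
  simp [cobd]

omit [DecidableEq V] in
theorem ssubset_of_mem_bd (h : σ ∈ bd τ) : σ ⊂ τ :=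
  Finset.ssubset_iff_subset_ne.2 ⟨(mem_bd.1 h).1, by rintro rfl; simp at h⟩

theorem ssubset_of_mem_cobd (h : τ ∈ cobd K σ) : σ ⊂ τ :=
  Finset.ssubset_iff_subset_ne.2 ⟨(mem_cobd.1 h).2.1, by rintro rfl; simp at h⟩

omit [DecidableEq V] in
theorem IsComplex.mem_of_mem_bd (hK : IsComplex K) (hτ : τ ∈ K) (hσ : σ ∈ bd τ) : σ ∈ K :=
  (hK τ hτ).2 σ (mem_bd.1 hσ).1 (mem_bd.1 hσ).2.1

theorem IsFreePair.card_add_one (hK : IsComplex K) (h : IsFreePair K σ τ) : #σ + 1 = #τ := by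
  obtain ⟨-, hτ, hστ, huniq⟩ := h
  obtain ⟨t, htτ, htσ⟩ := exists_of_ssubset hστ
  have hmem : insert t σ ∈ K := (hK τ hτ).2 _ (insert_subset htτ hστ.subset) (insert_nonempty _ _)
  rw [← huniq _ hmem (ssubset_insert htσ), card_insert_of_notMem htσ]

theorem IsFreePair.mem_bd (hK : IsComplex K) (h : IsFreePair K σ τ) : σ ∈ bd τ :=
  _root_.mem_bd.2 ⟨h.2.2.1.subset, (hK σ h.1).1, h.card_add_one hK⟩

theorem IsFreePair.right_notMem_of_chainSum_bd_eq_empty {w : Finset (Finset V)}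
    (hK : IsComplex K) (h : IsFreePair K σ τ) (hw : w ⊆ K) (hcyc : chainSum w bd = ∅) :
    τ ∉ w := fun hτw => by
  obtain ⟨ρ, hρ, hσρ, hρτ⟩ := exists_ne_of_chainSum_eq_empty hcyc hτw (h.mem_bd hK)
  exact hρτ (h.2.2.2 ρ (hw hρ) (ssubset_of_mem_bd hσρ))

theorem card_eq_two_of_mem_iff_between {S : Finset (Finset V)} {s t : Finset V} (hst : s ⊆ t)
    (hcard : #s + 2 = #t) (hS : ∀ ρ, ρ ∈ S ↔ s ⊆ ρ ∧ ρ ⊆ t ∧ #s + 1 = #ρ) : #S = 2 := by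
  have hS_eq : S = (t \ s).image (insert · s) := by
    ext ρ
    rw [hS, mem_image, and_left_comm, ← exists_eq_insert_iff]
    constructor
    · rintro ⟨hρt, a, ha, rfl⟩
      exact ⟨a, mem_sdiff.2 ⟨hρt (mem_insert_self a s), ha⟩, rfl⟩
    · rintro ⟨a, ha, rfl⟩
      exact ⟨insert_subset (mem_sdiff.1 ha).1 hst, a, (mem_sdiff.1 ha).2, rfl⟩
  rw [hS_eq, card_image_of_injOn, card_sdiff_of_subset hst]
  · omega
  · intro a ha b _ hab
    exact (insert_inj (mem_sdiff.1 ha).2).1 hab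

theorem chainSum_bd_bd (τ : Finset V) : chainSum (bd τ) bd = ∅ := by
  refine chainSum_eq_empty_of_card_even fun ν => ?_
  rcases ((bd τ).filter (ν ∈ bd ·)).eq_empty_or_nonempty with h | ⟨σ, hσ⟩
  · rw [h]; rfl
  simp only [mem_filter, mem_bd] at hσ
  obtain ⟨⟨hστ, -, hσ⟩, hνσ, hν, hνσ'⟩ := hσ
  rw [card_eq_two_of_mem_iff_between (hνσ.trans hστ) (by omega)]
  intro ρ
  simp only [mem_filter, mem_bd]
  constructor
  · rintro ⟨⟨hρτ, -, -⟩, hνρ, -, hc⟩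
    exact ⟨hνρ, hρτ, hc⟩
  · rintro ⟨hνρ, hρτ, hc⟩
    exact ⟨⟨hρτ, hν.mono hνρ, by omega⟩, hνρ, hν, hc⟩

theorem chainSum_cobd_cobd (hK : IsComplex K) (σ : Finset V) :
    chainSum (cobd K σ) (cobd K) = ∅ := by
  refine chainSum_eq_empty_of_card_even fun ν => ?_
  rcases ((cobd K σ).filter (ν ∈ cobd K ·)).eq_empty_or_nonempty with h | ⟨τ, hτ⟩
  · rw [h]; rfl
  simp only [mem_filter, mem_cobd] at hτ
  obtain ⟨⟨-, hστ, hτ⟩, hνK, hτν, hτν'⟩ := hτ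
  rw [card_eq_two_of_mem_iff_between (hστ.trans hτν) (by omega)]
  intro ρ
  simp only [mem_filter, mem_cobd]
  constructor
  · rintro ⟨⟨-, hσρ, hc⟩, -, hρν, -⟩
    exact ⟨hσρ, hρν, hc⟩
  · rintro ⟨hσρ, hρν, hc⟩
    have hρ : ρ.Nonempty := card_pos.1 (by omega)
    exact ⟨⟨(hK ν hνK).2 ρ hρν hρ, hσρ, hc⟩, hνK, hρν, by omega⟩

omit [DecidableEq V] in
theorem IsChainOf.subset (hc : IsChainOf K p c) : c ⊆ K :=
  fun ν hν => (hc ν hν).1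

omit [DecidableEq V] in
theorem IsChainOf.mono {L : Finset (Finset V)} (hc : IsChainOf K p c) (hKL : K ⊆ L) :
    IsChainOf L p c :=
  fun ν hν => ⟨hKL (hc ν hν).1, (hc ν hν).2⟩

theorem IsChainOf.sdiff {s : Finset (Finset V)} (hc : IsChainOf K p c) (hs : Disjoint c s) :
    IsChainOf (K \ s) p c :=
  fun ν hν => ⟨mem_sdiff.2 ⟨(hc ν hν).1, disjoint_left.1 hs hν⟩, (hc ν hν).2⟩

theorem IsChainOf.symmDiff {c' : Finset (Finset V)} (hc : IsChainOf K p c)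
    (hc' : IsChainOf K p c') : IsChainOf K p (c ∆ c') := by
  intro ν hν
  rcases mem_symmDiff.1 hν with ⟨h, -⟩ | ⟨h, -⟩
  exacts [hc ν h, hc' ν h]

theorem IsFreePair.disjoint_cobd_sdiff {L : Finset (Finset V)} (h : IsFreePair K σ τ) :
    Disjoint (cobd L σ) (K \ {σ, τ}) :=
  disjoint_left.2 fun ρ hρ hρK => by
    have := h.2.2.2 ρ (mem_sdiff.1 hρK).1 (ssubset_of_mem_cobd hρ)
    simp_all

omit [DecidableEq V] in
theorem isChainOf_singleton (hσ : σ ∈ K) (hcard : #σ = p + 1) : IsChainOf K p {σ} := by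
  simp [IsChainOf, hσ, hcard]

omit [DecidableEq V] in
theorem isChainOf_bd (hK : IsComplex K) (hτ : τ ∈ K) (hcard : #τ = p + 2) :
    IsChainOf K p (bd τ) :=
  fun σ hσ => ⟨hK.mem_of_mem_bd hτ hσ, by have := (mem_bd.1 hσ).2.2; omega⟩

theorem isChainOf_cobd (hcard : #σ = p) : IsChainOf K p (cobd K σ) :=
  fun τ hτ => ⟨(mem_cobd.1 hτ).1, by have := (mem_cobd.1 hτ).2.2; omega⟩

end Faces

namespace MorseSeq

variable (W : MorseSeq V) {i : ℕ}

theorem step_cases (hi : i < W.k) :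
    (∃ σ τ, IsFreePair (W.seq (i + 1)) σ τ ∧ W.Regular σ τ ∧
      W.seq i = W.seq (i + 1) \ {σ, τ}) ∨
    ∃ ν, ν ∈ W.seq (i + 1) ∧ W.Critical ν ∧ W.seq i = W.seq (i + 1) \ {ν} := by
  have hstep := W.step (i + 1) (by omega) hi
  rw [Nat.add_sub_cancel] at hstep
  rcases hstep with ⟨σ, τ, hfree, hL⟩ | ⟨ν, hfacet, hL⟩
  · have hnew : W.seq (i + 1) \ W.seq i = {σ, τ} := by
      rw [hL, Finset.sdiff_sdiff_eq_self (insert_subset hfree.1 (singleton_subset_iff.2 hfree.2.1))]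
    exact Or.inl ⟨σ, τ, hfree, ⟨i + 1, by omega, hi, hfree.2.2.1, hnew⟩, hL⟩
  · have hnew : W.seq (i + 1) \ W.seq i = {ν} := by
      rw [hL, Finset.sdiff_sdiff_eq_self (singleton_subset_iff.2 hfacet.1)]
    exact Or.inr ⟨ν, hfacet.1, ⟨i + 1, by omega, hi, hnew⟩, hL⟩

theorem seq_subset_succ (hi : i < W.k) : W.seq i ⊆ W.seq (i + 1) := by
  rcases W.step_cases hi with ⟨σ, τ, -, -, hL⟩ | ⟨ν, -, -, hL⟩ <;> rw [hL] <;> exact sdiff_subset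

theorem seq_subset_cplx (hi : i ≤ W.k) : W.seq i ⊆ W.cplx := by
  induction hi using Nat.decreasingInduction with
  | self => exact subset_rfl
  | of_succ i hi ih => exact (W.seq_subset_succ hi).trans ih

end MorseSeq

theorem disjoint_of_disjoint_sdiff {α : Type*} [DecidableEq α] {w A s : Finset α}
    (h : Disjoint w (A \ s)) (hs : Disjoint w s) : Disjoint w A :=
  (disjoint_sup_right.2 ⟨h, hs⟩).mono_right le_sdiff_sup

section Reference

variable {W : MorseSeq V} {Λ Vee : Finset V → Finset (Finset V)} {i p : ℕ}
  {w : Finset (Finset V)} {μ : Finset V}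

theorem IsRefMap.subset_seq (hΛ : IsRefMap W Λ) (hi : i ≤ W.k) (hμ : μ ∈ W.seq i) :
    Λ μ ⊆ W.seq i := by
  induction i generalizing μ with
  | zero => simp [W.init] at hμ
  | succ i ih =>
    have hsub := W.seq_subset_succ hi
    by_cases hold : μ ∈ W.seq i
    · exact (ih (by omega) hold).trans hsub
    rcases W.step_cases hi with ⟨σ, τ, hfree, hreg, hL⟩ | ⟨ν, -, hcrit, hL⟩
    · have hK := W.cpx _ hi
      obtain rfl | rfl : μ = σ ∨ μ = τ := by rw [hL] at hold; simp [hμ] at hold; tauto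
      · intro ν hν
        obtain ⟨ρ, hρ, hνρ, hρμ⟩ :=
          exists_ne_of_chainSum_eq_empty (hΛ.2.2 τ ⟨μ, hreg⟩).2 (hfree.mem_bd hK) hν
        have hρτ : ρ ≠ τ := (ssubset_of_mem_bd hρ).ne
        have hρ_old : ρ ∈ W.seq i := by
          rw [hL]
          simp [hK.mem_of_mem_bd hfree.2.1 hρ, hρμ, hρτ]
        exact hsub (ih (by omega) hρ_old hνρ)
      · simp [(hΛ.2.2 μ ⟨σ, hreg⟩).1]
    · obtain rfl : μ = ν := by rw [hL] at hold; simpa [hμ] using hold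
      simpa [hΛ.2.1 μ hcrit] using hμ

theorem IsCorefMap.disjoint_seq (hV : IsCorefMap W Vee) (hi : i ≤ W.k) (hμK : μ ∈ W.cplx)
    (hμ : μ ∉ W.seq i) : Disjoint (Vee μ) (W.seq i) := by
  induction hi using Nat.decreasingInduction generalizing μ with
  | self => exact absurd hμK hμ
  | of_succ i hi ih =>
    have hsub := W.seq_subset_succ hi
    by_cases hnew : μ ∉ W.seq (i + 1)
    · exact (ih hμK hnew).mono_right hsub
    rw [not_not] at hnew
    rcases W.step_cases hi with ⟨σ, τ, hfree, hreg, hL⟩ | ⟨ν, -, hcrit, hL⟩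
    · obtain rfl | rfl : μ = σ ∨ μ = τ := by rw [hL] at hμ; simp [hnew] at hμ; tauto
      · simp [(hV.2.2 μ ⟨τ, hreg⟩).1]
      · refine disjoint_left.2 fun ν hν => ?_
        have hμ_cobd : μ ∈ cobd W.cplx σ :=
          mem_cobd.2 ⟨hμK, hfree.2.2.1.subset, hfree.card_add_one (W.cpx _ hi)⟩
        obtain ⟨ρ, hρ, hνρ, hρμ⟩ :=
          exists_ne_of_chainSum_eq_empty (hV.2.2 σ ⟨μ, hreg⟩).2 hμ_cobd hν
        have hρ_new : ρ ∉ W.seq (i + 1) := fun h => hρμ (hfree.2.2.2 ρ h (ssubset_of_mem_cobd hρ))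
        exact fun h => disjoint_left.1 (ih (mem_cobd.1 hρ).1 hρ_new) hνρ (hsub h)
    · obtain rfl : μ = ν := by rw [hL] at hμ; simpa [hnew] using hμ
      simpa [hV.2.1 μ hcrit] using hμ

theorem IsRefMap.exists_chainSum_bd_eq (hΛ : IsRefMap W Λ) (hi : i ≤ W.k)
    (hw : IsChainOf (W.seq i) p w) (hcyc : chainSum w bd = ∅) (href : chainSum w Λ = ∅) :
    ∃ c, IsChainOf (W.seq i) (p + 1) c ∧ chainSum c bd = w := by
  induction i generalizing w with
  | zero =>
    obtain rfl : w = ∅ := subset_empty.1 (W.init ▸ hw.subset)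
    exact ⟨∅, fun _ h => absurd h (notMem_empty _), chainSum_empty⟩
  | succ i ih =>
    have hsub := W.seq_subset_succ hi
    rcases W.step_cases hi with ⟨σ, τ, hfree, hreg, hL⟩ | ⟨ν, -, hcrit, hL⟩
    · have hK := W.cpx _ hi
      have hσ_bd := hfree.mem_bd hK
      have hτw : τ ∉ w := hfree.right_notMem_of_chainSum_bd_eq_empty hK hw.subset hcyc
      by_cases hσw : σ ∈ w
      · have hτ_card : #τ = p + 2 := by rw [← hfree.card_add_one hK, (hw σ hσw).2]
        have hτ_bd : τ ∉ bd τ := fun h => (ssubset_of_mem_bd h).ne rfl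
        have hw' : IsChainOf (W.seq i) p (w ∆ bd τ) :=
          hL ▸ (hw.symmDiff (isChainOf_bd hK hfree.2.1 hτ_card)).sdiff
            (by simp [mem_symmDiff, hσw, hτw, hσ_bd, hτ_bd])
        obtain ⟨c, hc, hcw⟩ := ih (by omega) hw'
          (by simp [chainSum_symmDiff, hcyc, chainSum_bd_bd])
          (by simp [chainSum_symmDiff, href, (hΛ.2.2 τ ⟨σ, hreg⟩).2])
        refine ⟨c ∆ {τ}, (hc.mono hsub).symmDiff (isChainOf_singleton hfree.2.1 hτ_card), ?_⟩
        rw [chainSum_symmDiff, hcw, chainSum_singleton, symmDiff_symmDiff_cancel_right]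
      · obtain ⟨c, hc, hcw⟩ := ih (by omega) (hL ▸ hw.sdiff (by simp [hσw, hτw])) hcyc href
        exact ⟨c, hc.mono hsub, hcw⟩
    · have hνw : ν ∉ w := fun hνw => by
        obtain ⟨μ, hμ, hνμ, hμν⟩ :=
          exists_ne_of_chainSum_eq_empty href hνw (ν := ν) (by simp [hΛ.2.1 ν hcrit])
        have hμ_old : μ ∈ W.seq i := by
          rw [hL]
          simp [hw.subset hμ, hμν]
        have := hΛ.subset_seq (by omega) hμ_old hνμ
        simp [hL] at this
      obtain ⟨c, hc, hcw⟩ := ih (by omega) (hL ▸ hw.sdiff (by simp [hνw])) hcyc href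
      exact ⟨c, hc.mono hsub, hcw⟩

theorem IsCorefMap.exists_chainSum_cobd_eq (hV : IsCorefMap W Vee) (hi : i ≤ W.k)
    (hw : IsChainOf W.cplx p w) (hdisj : Disjoint w (W.seq i))
    (hcoc : chainSum w (cobd W.cplx) = ∅) (hcoref : chainSum w Vee = ∅) :
    ∃ c, IsChainOf W.cplx (p - 1) c ∧ chainSum c (cobd W.cplx) = w := by
  induction hi using Nat.decreasingInduction generalizing w with
  | self =>
    obtain rfl : w = ∅ := hdisj.eq_bot_of_le hw.subset
    exact ⟨∅, fun _ h => absurd h (notMem_empty _), chainSum_empty⟩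
  | of_succ i hi ih =>
    have hKcplx : IsComplex W.cplx := W.cpx _ le_rfl
    rcases W.step_cases hi with ⟨σ, τ, hfree, hreg, hL⟩ | ⟨ν, hν, hcrit, hL⟩
    · have hK := W.cpx _ hi
      have hcard := hfree.card_add_one hK
      have hτ_cobd : τ ∈ cobd W.cplx σ :=
        mem_cobd.2 ⟨W.seq_subset_cplx hi hfree.2.1, hfree.2.2.1.subset, hcard⟩
      have hσw : σ ∉ w := fun hσw => by
        obtain ⟨ρ, hρ, hτρ, hρσ⟩ := exists_ne_of_chainSum_eq_empty hcoc hσw hτ_cobd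
        have hρ_new : ρ ∈ W.seq (i + 1) :=
          (hK τ hfree.2.1).2 ρ (mem_cobd.1 hτρ).2.1 (hKcplx ρ (hw.subset hρ)).1
        refine disjoint_left.1 hdisj hρ ?_
        rw [hL]
        simp [hρ_new, hρσ, (ssubset_of_mem_cobd hτρ).ne]
      by_cases hτw : τ ∈ w
      · have hσ_card : #σ = p := by have := (hw τ hτw).2; omega
        have hσ_cobd : σ ∉ cobd W.cplx σ := fun h => (ssubset_of_mem_cobd h).ne rfl
        have hw' : Disjoint (w ∆ cobd W.cplx σ) (W.seq (i + 1)) := disjoint_of_disjoint_sdiff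
          (hL ▸ hdisj.symmDiff_left (hL ▸ hfree.disjoint_cobd_sdiff))
          (by simp [mem_symmDiff, hσw, hτw, hτ_cobd, hσ_cobd])
        obtain ⟨c, hc, hcw⟩ := ih (hw.symmDiff (isChainOf_cobd hσ_card)) hw'
          (by simp [chainSum_symmDiff, hcoc, chainSum_cobd_cobd hKcplx])
          (by simp [chainSum_symmDiff, hcoref, (hV.2.2 σ ⟨τ, hreg⟩).2])
        have hp : 0 < p := hσ_card ▸ card_pos.2 (hK σ hfree.1).1
        have hσ_chain : IsChainOf W.cplx (p - 1) {σ} :=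
          isChainOf_singleton (W.seq_subset_cplx hi hfree.1) (by omega)
        refine ⟨c ∆ {σ}, hc.symmDiff hσ_chain, ?_⟩
        rw [chainSum_symmDiff, hcw, chainSum_singleton, symmDiff_symmDiff_cancel_right]
      · exact ih hw (disjoint_of_disjoint_sdiff (hL ▸ hdisj) (by simp [hσw, hτw])) hcoc hcoref
    · have hνw : ν ∉ w := fun hνw => by
        obtain ⟨μ, hμ, hνμ, hμν⟩ :=
          exists_ne_of_chainSum_eq_empty hcoref hνw (ν := ν) (by simp [hV.2.1 ν hcrit])
        have hμ_new : μ ∉ W.seq (i + 1) := fun h =>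
          disjoint_left.1 hdisj hμ (by rw [hL]; simp [h, hμν])
        exact disjoint_left.1 (hV.disjoint_seq (by omega) (hw.subset hμ) hμ_new) hνμ hν
      exact ih hw (disjoint_of_disjoint_sdiff (hL ▸ hdisj) (by simp [hνw])) hcoc hcoref

end Reference

/-- Two `p`-cycles with the same reference are homologous; two
`p`-cocycles with the same coreference are cohomologous. -/
theorem same_reference_implies_homologous (W : MorseSeq V)
    (Λ Vee : Finset V → Finset (Finset V))
    (hΛ : IsRefMap W Λ) (hV : IsCorefMap W Vee)
    (p : ℕ) (z z' : Finset (Finset V))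
    (hz : IsChainOf W.cplx p z) (hz' : IsChainOf W.cplx p z') :
    (chainSum z bd = ∅ → chainSum z' bd = ∅ →
      chainSum z Λ = chainSum z' Λ → Homologous W.cplx p z z') ∧
    (chainSum z (cobd W.cplx) = ∅ → chainSum z' (cobd W.cplx) = ∅ →
      chainSum z Vee = chainSum z' Vee → Cohomologous W.cplx p z z') := by
  have hw : IsChainOf W.cplx p (z ∆ z') := hz.symmDiff hz'
  refine ⟨fun hcyc hcyc' heq => ?_, fun hcoc hcoc' heq => ?_⟩
  · exact hΛ.exists_chainSum_bd_eq le_rfl hw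
      (by simp [chainSum_symmDiff, hcyc, hcyc']) (by simp [chainSum_symmDiff, heq])
  · exact hV.exists_chainSum_cobd_eq (Nat.zero_le _) hw (by simp [W.init])
      (by simp [chainSum_symmDiff, hcoc, hcoc']) (by simp [chainSum_symmDiff, heq])
end

section
/- Let W be a Morse sequence on K with extension map ∧̃ and coextension map ∨̃, and reference pair (∧,∨). Then for every p, ∧_p ∘ ∧̃_p is the identity on Ŵ[p] and ∨_p ∘ ∨̃_p is the identity on Ŵ[p]. -/
/-! ## Basic notions: simplicial complexes, collapses, expansions, fillings -/

variable {V : Type*} [DecidableEq V]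

lemma mem_chainSum_s11 {c : Finset (Finset V)} {f : Finset V → Finset (Finset V)} {μ : Finset V} :
    μ ∈ chainSum c f ↔ (c.filter fun σ => μ ∈ f σ).card % 2 = 1 := by
  constructor
  · intro h; exact (Finset.mem_filter.mp h).2
  · intro h
    refine Finset.mem_filter.mpr ⟨?_, h⟩
    have hne : (c.filter fun σ => μ ∈ f σ).Nonempty := by
      rw [← Finset.card_pos]; omega
    obtain ⟨σ, hσ⟩ := hne
    rw [Finset.mem_filter] at hσ
    exact Finset.mem_biUnion.mpr ⟨σ, hσ.1, hσ.2⟩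

lemma key_ref_ext (K : Finset (Finset V)) (Λ Vee : Finset V → Finset (Finset V))
    (Crit A B : Finset V → Prop)
    (hCritK : ∀ ν, Crit ν → ν ∈ K)
    (htri : ∀ ν ∈ K, Crit ν ∨ A ν ∨ B ν)
    (hVc : ∀ ν, Crit ν → Vee ν = {ν})
    (hΛc : ∀ ν, Crit ν → Λ ν = {ν})
    (hVA : ∀ ν, A ν → Vee ν = ∅)
    (hΛB : ∀ ν, B ν → Λ ν = ∅)
    (c : Finset (Finset V)) (hc : ∀ ν ∈ c, Crit ν) :
    chainSum (chainSum c (fun κ => K.filter fun ν => κ ∈ Vee ν)) Λ = c := by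
  set g : Finset V → Finset (Finset V) := fun κ => K.filter fun ν => κ ∈ Vee ν with hg
  set d := chainSum c g with hd
  ext μ
  rw [mem_chainSum_s11]
  have hfilter : (d.filter fun ν => μ ∈ Λ ν) = if μ ∈ c then {μ} else ∅ := by
    ext ν
    rw [Finset.mem_filter]
    constructor
    · rintro ⟨hνd, hμΛ⟩
      have hνd' := mem_chainSum_s11.mp hνd
      have hex : ∃ κ ∈ c, ν ∈ g κ := by
        have hne : (c.filter fun κ => ν ∈ g κ).Nonempty := by
          rw [← Finset.card_pos]; omega
        obtain ⟨κ, hκ⟩ := hne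
        rw [Finset.mem_filter] at hκ
        exact ⟨κ, hκ.1, hκ.2⟩
      obtain ⟨κ, hκc, hκg⟩ := hex
      rw [hg, Finset.mem_filter] at hκg
      obtain ⟨hνK, hκV⟩ := hκg
      rcases htri ν hνK with hC | hA | hB
      · have hνc : ν ∈ c := by
          rw [hVc ν hC, Finset.mem_singleton] at hκV
          rwa [hκV] at hκc
        have hμν : μ = ν := by
          rw [hΛc ν hC, Finset.mem_singleton] at hμΛ; exact hμΛ
        subst hμν
        simp [hνc]
      · rw [hVA ν hA] at hκV; simp at hκV
      · rw [hΛB ν hB] at hμΛ; simp at hμΛ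
    · intro hν
      by_cases hμc : μ ∈ c
      · simp only [hμc, if_true, Finset.mem_singleton] at hν
        rw [hν]
        have hCrit := hc μ hμc
        refine ⟨?_, by rw [hΛc μ hCrit]; simp⟩
        rw [hd, mem_chainSum_s11]
        have hone : (c.filter fun κ => μ ∈ g κ) = {μ} := by
          ext κ
          simp only [Finset.mem_filter, hg, Finset.mem_singleton]
          constructor
          · rintro ⟨hκc, _, hκV⟩
            rw [hVc μ hCrit, Finset.mem_singleton] at hκV
            exact hκV
          · intro h
            rw [h]
            exact ⟨hμc, hCritK μ hCrit, by rw [hVc μ hCrit]; simp⟩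
        rw [hone]; simp
      · simp [hμc] at hν
  rw [hfilter]
  by_cases hμc : μ ∈ c <;> simp [hμc]

lemma MorseSeq.seq_step_subset (W : MorseSeq V) {i : ℕ} (h1 : 1 ≤ i) (h2 : i ≤ W.k) :
    W.seq (i - 1) ⊆ W.seq i := by
  rcases W.step i h1 h2 with ⟨σ, τ, _, h⟩ | ⟨ν, _, h⟩ <;> rw [h] <;> exact Finset.sdiff_subset

lemma MorseSeq.seq_mono (W : MorseSeq V) : ∀ {i j : ℕ}, i ≤ j → j ≤ W.k →
    W.seq i ⊆ W.seq j := by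
  intro i j
  induction j with
  | zero =>
    intro h _
    have : i = 0 := by omega
    subst this; exact subset_rfl
  | succ n ih =>
    intro hij hj
    rcases Nat.lt_or_ge i (n + 1) with h | h
    · refine (ih (by omega) (by omega)).trans ?_
      have := W.seq_step_subset (i := n + 1) (by omega) hj
      simpa using this
    · have : i = n + 1 := by omega
      subst this; exact subset_rfl

lemma MorseSeq.critical_mem (W : MorseSeq V) {ν : Finset V} (h : W.Critical ν) :
    ν ∈ W.cplx := by
  obtain ⟨i, h1, h2, hdiff⟩ := h
  have hmem : ν ∈ W.seq i := by
    have : ν ∈ W.seq i \ W.seq (i - 1) := by rw [hdiff]; simp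
    exact (Finset.mem_sdiff.mp this).1
  exact W.seq_mono h2 le_rfl hmem

lemma MorseSeq.trichotomy (W : MorseSeq V) {ν : Finset V} (h : ν ∈ W.cplx) :
    W.Critical ν ∨ W.LowerRegular ν ∨ W.UpperRegular ν := by
  suffices H : ∀ n, n ≤ W.k → ∀ ν ∈ W.seq n,
      W.Critical ν ∨ W.LowerRegular ν ∨ W.UpperRegular ν from H W.k le_rfl ν h
  intro n
  induction n with
  | zero => intro _ ν hν; rw [W.init] at hν; simp at hν
  | succ n ih =>
    intro hn ν hν
    by_cases hmem : ν ∈ W.seq n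
    · exact ih (by omega) ν hmem
    rcases W.step (n + 1) (by omega) hn with ⟨σ, τ, hfree, heq⟩ | ⟨μ, hfac, heq⟩
    · have hdiff : W.seq (n + 1) \ W.seq n = {σ, τ} := by
        rw [show W.seq n = W.seq ((n + 1) - 1) from rfl, heq,
          Finset.sdiff_sdiff_self_left, Finset.inter_eq_right.mpr]
        intro x hx
        rcases Finset.mem_insert.mp hx with h' | h'
        · subst h'; exact hfree.1
        · rw [Finset.mem_singleton] at h'; subst h'; exact hfree.2.1
      have hν' : ν ∈ ({σ, τ} : Finset (Finset V)) := by
        rw [← hdiff]; exact Finset.mem_sdiff.mpr ⟨hν, hmem⟩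
      rcases Finset.mem_insert.mp hν' with h' | h'
      · subst h'
        exact Or.inr (Or.inl ⟨τ, n + 1, by omega, hn, hfree.2.2.1, hdiff⟩)
      · rw [Finset.mem_singleton] at h'; subst h'
        exact Or.inr (Or.inr ⟨σ, n + 1, by omega, hn, hfree.2.2.1, hdiff⟩)
    · have hdiff : W.seq (n + 1) \ W.seq n = {μ} := by
        rw [show W.seq n = W.seq ((n + 1) - 1) from rfl, heq,
          Finset.sdiff_sdiff_self_left, Finset.inter_eq_right.mpr]
        intro x hx
        rw [Finset.mem_singleton] at hx; subst hx; exact hfac.1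
      have hν' : ν ∈ ({μ} : Finset (Finset V)) := by
        rw [← hdiff]; exact Finset.mem_sdiff.mpr ⟨hν, hmem⟩
      rw [Finset.mem_singleton] at hν'; subst hν'
      exact Or.inl ⟨n + 1, by omega, hn, hdiff⟩

/-- `∧_p ∘ ∧̃_p = Id` and `∨_p ∘ ∨̃_p = Id` on chains `Ŵ[p]` of
critical `p`-simplices. -/
theorem reference_comp_extension_eq_id (W : MorseSeq V)
    (Λ Vee : Finset V → Finset (Finset V))
    (hΛ : IsRefMap W Λ) (hV : IsCorefMap W Vee)
    (p : ℕ) (c : Finset (Finset V)) (hc : IsCritChain W p c) :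
    chainSum (chainSum c (extMap W Vee)) Λ = c ∧
    chainSum (chainSum c (coextMap W Λ)) Vee = c := by
  obtain ⟨hΛf, hΛcrit, hΛup⟩ := hΛ
  obtain ⟨hVf, hVcrit, hVlow⟩ := hV
  have hcC : ∀ ν ∈ c, W.Critical ν := fun ν hν => (hc ν hν).1
  constructor
  · exact key_ref_ext W.cplx Λ Vee W.Critical W.LowerRegular W.UpperRegular
      (fun ν h => W.critical_mem h) (fun ν h => W.trichotomy h)
      hVcrit hΛcrit (fun ν h => (hVlow ν h).1) (fun ν h => (hΛup ν h).1) c hcC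
  · exact key_ref_ext W.cplx Vee Λ W.Critical W.UpperRegular W.LowerRegular
      (fun ν h => W.critical_mem h) (fun ν h => (W.trichotomy h).imp_right Or.symm)
      hΛcrit hVcrit (fun ν h => (hΛup ν h).1) (fun ν h => (hVlow ν h).1) c hcC
end
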